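/- arXiv:1304.4426 — 3 statements merged into one kernel-verified Lean document; each statement's English description precedes it below -/
import Mathlib

section
/- There is no nondegenerate symmetric (0,2)-tensor g on ℝ³ whose Levi-Civita connection equals the connection with Christoffel symbols Γ¹₂₃ = Γ¹₃₂ = x₂ (all others zero); i.e., this connection is non-metrizable. -/
noncomputable section

open scoped BigOperators

/-- Partial derivative of a scalar function on `ℝⁿ` in the `i`-th coordinate direction. -/
def pd {n : ℕ} (i : Fin n) (f : (Fin n → ℝ) → ℝ) (x : Fin n → ℝ) : ℝ :=
  fderiv ℝ f x (Pi.single i 1)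

/-- The `m`-th coordinate of a point of `ℝⁿ` (junk value `0` if `m ≥ n`). -/
def co {n : ℕ} (m : ℕ) (x : Fin n → ℝ) : ℝ :=
  if h : m < n then x ⟨m, h⟩ else 0

/-- Christoffel symbols `Γ^k_{ij} = ½ g^{kl}(∂_i g_{jl} + ∂_j g_{il} − ∂_l g_{ij})`
of a metric given as a matrix-valued function. -/
def christoffel {n : ℕ} (g : (Fin n → ℝ) → Matrix (Fin n) (Fin n) ℝ)
    (k i j : Fin n) (x : Fin n → ℝ) : ℝ :=
  (1/2) * ∑ l, (g x)⁻¹ k l *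
    (pd i (fun y => g y j l) x + pd j (fun y => g y i l) x - pd l (fun y => g y i j) x)

/-- Curvature tensor `R^i_{jkl}` of a torsion-free connection with Christoffel symbols `Γ`. -/
def curvature {n : ℕ} (Γ : Fin n → Fin n → Fin n → (Fin n → ℝ) → ℝ)
    (i j k l : Fin n) (x : Fin n → ℝ) : ℝ :=
  pd k (Γ i l j) x - pd l (Γ i k j) x +
    ∑ s, (Γ i k s x * Γ s l j x - Γ i l s x * Γ s k j x)

/-- Ricci tensor `Ric_{jl} = R^i_{jil}`. -/
def ricci {n : ℕ} (Γ : Fin n → Fin n → Fin n → (Fin n → ℝ) → ℝ)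
    (j l : Fin n) (x : Fin n → ℝ) : ℝ :=
  ∑ i, curvature Γ i j i l x

/-- Lie derivative `(L_v g)_{ij} = v^k ∂_k g_{ij} + g_{kj} ∂_i v^k + g_{ik} ∂_j v^k`. -/
def lieMetric {n : ℕ} (v : Fin n → (Fin n → ℝ) → ℝ)
    (g : (Fin n → ℝ) → Matrix (Fin n) (Fin n) ℝ) (i j : Fin n) (x : Fin n → ℝ) : ℝ :=
  ∑ k, (v k x * pd k (fun y => g y i j) x
        + g x k j * pd i (v k) x + g x i k * pd j (v k) x)

/-- Lie derivative `(L_v Γ)^k_{ij}` of a torsion-free connection along a vector field `v`. -/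
def lieConn {n : ℕ} (v : Fin n → (Fin n → ℝ) → ℝ)
    (Γ : Fin n → Fin n → Fin n → (Fin n → ℝ) → ℝ)
    (k i j : Fin n) (x : Fin n → ℝ) : ℝ :=
  pd i (fun y => pd j (v k) y) x +
    ∑ s, (v s x * pd s (Γ k i j) x + Γ k s j x * pd i (v s) x
          + Γ k i s x * pd j (v s) x - Γ s i j x * pd s (v k) x)

/-- A vector field with smooth components. -/
def SmoothVF {n : ℕ} (v : Fin n → (Fin n → ℝ) → ℝ) : Prop :=
  ∀ k, ContDiff ℝ (⊤ : ℕ∞) (v k)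

/-- `v` is a projective vector field of `g`: the Lie derivative of the Levi-Civita
connection along `v` is of the form `δ^k_i φ_j + δ^k_j φ_i` for some 1-form `φ`
(the standard characterization of projective fields). -/
def IsProjectiveField {n : ℕ} (g : (Fin n → ℝ) → Matrix (Fin n) (Fin n) ℝ)
    (v : Fin n → (Fin n → ℝ) → ℝ) : Prop :=
  ∃ φ : Fin n → (Fin n → ℝ) → ℝ, ∀ k i j x,
    lieConn v (christoffel g) k i j x =
      (if k = i then φ j x else 0) + (if k = j then φ i x else 0)

/-- The set of (smooth) projective vector fields of `g`: the projective algebra `𝔭(g)`. -/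
def ProjSet {n : ℕ} (g : (Fin n → ℝ) → Matrix (Fin n) (Fin n) ℝ) :
    Set (Fin n → (Fin n → ℝ) → ℝ) :=
  {v | SmoothVF v ∧ IsProjectiveField g v}

/-- The set of (smooth) Killing fields of `g`: the isometry algebra `I(g)`. -/
def KillSet {n : ℕ} (g : (Fin n → ℝ) → Matrix (Fin n) (Fin n) ℝ) :
    Set (Fin n → (Fin n → ℝ) → ℝ) :=
  {v | SmoothVF v ∧ ∀ i j x, lieMetric v g i j x = 0}

/-- The set of (smooth) homothety fields of `g` (`L_v g = λ·g`, `λ` constant):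
the homothety algebra `H(g)`. -/
def HomSet {n : ℕ} (g : (Fin n → ℝ) → Matrix (Fin n) (Fin n) ℝ) :
    Set (Fin n → (Fin n → ℝ) → ℝ) :=
  {v | SmoothVF v ∧ ∃ c : ℝ, ∀ i j x, lieMetric v g i j x = c * g x i j}

/-- Egorov's connection on ℝ³: the only nonzero Christoffel symbols are
`Γ¹₂₃ = Γ¹₃₂ = x₂` (0-indexed: `Γ⁰₁₂ = Γ⁰₂₁ = x 1`). -/
def egorovConn : Fin 3 → Fin 3 → Fin 3 → (Fin 3 → ℝ) → ℝ :=
  fun k i j x => if k = 0 ∧ ((i = 1 ∧ j = 2) ∨ (i = 2 ∧ j = 1)) then x 1 else 0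

section EgorovAux

lemma pd_const {n : ℕ} (i : Fin n) (c : ℝ) (x : Fin n → ℝ) :
    pd i (fun _ => c) x = 0 := by
  simp [pd]

lemma coord_eq_clm {n : ℕ} (j : Fin n) :
    (fun y : Fin n → ℝ => y j) = (ContinuousLinearMap.proj j : (Fin n → ℝ) →L[ℝ] ℝ) := rfl

lemma diff_coord {n : ℕ} (j : Fin n) (x : Fin n → ℝ) :
    DifferentiableAt ℝ (fun y : Fin n → ℝ => y j) x := by
  rw [coord_eq_clm]
  exact (ContinuousLinearMap.proj j : (Fin n → ℝ) →L[ℝ] ℝ).differentiableAt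

lemma pd_coord {n : ℕ} (i j : Fin n) (x : Fin n → ℝ) :
    pd i (fun y : Fin n → ℝ => y j) x = if j = i then 1 else 0 := by
  rw [pd, coord_eq_clm, ContinuousLinearMap.fderiv]
  simp [Pi.single_apply]

lemma pd_mul {n : ℕ} {f h : (Fin n → ℝ) → ℝ} {x : Fin n → ℝ}
    (hf : DifferentiableAt ℝ f x) (hh : DifferentiableAt ℝ h x) (i : Fin n) :
    pd i (fun y => f y * h y) x = f x * pd i h x + h x * pd i f x := by
  simp [pd, fderiv_fun_mul hf hh]

lemma pd_add {n : ℕ} {f h : (Fin n → ℝ) → ℝ} {x : Fin n → ℝ}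
    (hf : DifferentiableAt ℝ f x) (hh : DifferentiableAt ℝ h x) (i : Fin n) :
    pd i (fun y => f y + h y) x = pd i f x + pd i h x := by
  simp [pd, fderiv_fun_add hf hh]

lemma pd_comm {n : ℕ} {f : (Fin n → ℝ) → ℝ} (hf : ContDiff ℝ (⊤ : ℕ∞) f) (a b : Fin n) (x : Fin n → ℝ) :
    pd a (fun y => pd b f y) x = pd b (fun y => pd a f y) x := by
  have hsymm : IsSymmSndFDerivAt ℝ f x :=
    hf.contDiffAt.isSymmSndFDerivAt (by rw [minSmoothness_of_isRCLikeNormedField]; exact WithTop.coe_le_coe.mpr (le_top : (2 : ℕ∞) ≤ ⊤))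
  have hd : DifferentiableAt ℝ (fderiv ℝ f) x := by
    have := (hf.fderiv_right (m := (⊤ : ℕ∞)) (by simp)).differentiable (by simp)
    exact this x
  have key : ∀ v w : Fin n → ℝ,
      fderiv ℝ (fun y => fderiv ℝ f y v) x w = fderiv ℝ (fderiv ℝ f) x w v := by
    intro v w
    rw [fderiv_clm_apply hd (differentiableAt_const v)]
    simp
  simp only [pd]
  rw [key, key, hsymm]

end EgorovAux

/-- Egorov's connection is non-metrizable: there is no smooth
nondegenerate symmetric (0,2)-tensor `g` on ℝ³ whose Levi-Civita connection is
this connection. -/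
theorem egorov_not_metrizable :
    ¬ ∃ g : (Fin 3 → ℝ) → Matrix (Fin 3) (Fin 3) ℝ,
      (∀ i j, ContDiff ℝ (⊤ : ℕ∞) (fun x => g x i j)) ∧
      (∀ x, (g x).IsSymm) ∧
      (∀ x, (g x).det ≠ 0) ∧
      (∀ k i j x, christoffel g k i j x = egorovConn k i j x) := by
  rintro ⟨g, hs, hsym, hdet, hC⟩
  -- pointwise symmetry of g
  have hgs : ∀ x (i j : Fin 3), g x i j = g x j i := fun x i j => (hsym x).apply j i
  -- differentiability of the entries
  have hdiff : ∀ (i j : Fin 3) x, DifferentiableAt ℝ (fun y => g y i j) x :=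
    fun i j x => ((hs i j).differentiable (by simp)) x
  -- Step 1: the compatibility equations ∇g = 0 in Christoffel form
  have hT : ∀ (i j m : Fin 3) x,
      pd i (fun y => g y j m) x + pd j (fun y => g y i m) x - pd m (fun y => g y i j) x
        = 2 * g x m 0 * egorovConn 0 i j x := by
    intro i j m x
    set t : Fin 3 → ℝ := fun l =>
      pd i (fun y => g y j l) x + pd j (fun y => g y i l) x - pd l (fun y => g y i j) x with ht
    have h1 : Matrix.mulVec (g x)⁻¹ t = fun k => 2 * egorovConn k i j x := by
      funext k
      have h2 : (1/2 : ℝ) * ∑ l, (g x)⁻¹ k l * t l = egorovConn k i j x := hC k i j x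
      simp only [Matrix.mulVec, dotProduct]
      linarith
    have h3 : Matrix.mulVec (g x) (Matrix.mulVec (g x)⁻¹ t) = t := by
      rw [Matrix.mulVec_mulVec, Matrix.mul_nonsing_inv _ (isUnit_iff_ne_zero.mpr (hdet x)),
        Matrix.one_mulVec]
    have h4 := congrFun h3 m
    rw [h1] at h4
    have h5 : (Matrix.mulVec (g x) fun k => 2 * egorovConn k i j x) m
        = 2 * g x m 0 * egorovConn 0 i j x := by
      simp only [Matrix.mulVec, dotProduct, Fin.sum_univ_three]
      have e1 : egorovConn 1 i j x = 0 := by simp [egorovConn]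
      have e2 : egorovConn 2 i j x = 0 := by simp [egorovConn]
      rw [e1, e2]; ring
    rw [h5] at h4
    simpa [ht] using h4.symm
  -- Step 2: the explicit formula for all first partials of g
  have hkey : ∀ (k i j : Fin 3) x,
      pd k (fun y => g y i j) x
        = g x j 0 * egorovConn 0 k i x + g x i 0 * egorovConn 0 k j x := by
    intro k i j x
    have t1 := hT k i j x
    have t2 := hT k j i x
    have e1 : (fun y => g y j i) = fun y => g y i j := funext fun y => hgs y j i
    rw [e1] at t2
    linarith
  -- values of the Egorov symbol
  have E0 : ∀ (k : Fin 3) x, egorovConn 0 k 0 x = 0 := by intro k x; simp [egorovConn]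
  have E11 : ∀ x, egorovConn (0 : Fin 3) 1 1 x = 0 := by intro x; simp [egorovConn]
  have E22 : ∀ x, egorovConn (0 : Fin 3) 2 2 x = 0 := by intro x; simp [egorovConn]
  have E12 : ∀ x, egorovConn (0 : Fin 3) 1 2 x = x 1 := by intro x; simp [egorovConn]
  have E21 : ∀ x, egorovConn (0 : Fin 3) 2 1 x = x 1 := by intro x; simp [egorovConn]
  -- all partials of g₀₀ vanish
  have h00 : ∀ (k : Fin 3) x, pd k (fun y => g y 0 0) x = 0 := by
    intro k x
    have := hkey k 0 0 x
    rw [E0 k x] at this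
    simpa using this
  -- partials of g₀₁
  have h01_1 : ∀ x, pd 1 (fun y => g y 0 1) x = 0 := by
    intro x
    have := hkey 1 0 1 x
    rw [E0 1 x, E11 x] at this
    simpa using this
  have h01_2 : ∀ x, pd 2 (fun y => g y 0 1) x = g x 0 0 * x 1 := by
    intro x
    have := hkey 2 0 1 x
    rw [E0 2 x, E21 x] at this
    simpa using this
  -- Clairaut on g₀₁ gives g₀₀ = 0
  have hA : ∀ x, g x 0 0 = 0 := by
    intro x
    have hc := pd_comm (hs 0 1) 1 2 x
    have l1 : (fun y => pd 2 (fun z => g z 0 1) y) = fun y => g y 0 0 * y 1 := funext h01_2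
    have l2 : (fun y => pd 1 (fun z => g z 0 1) y) = fun _ => (0 : ℝ) := funext h01_1
    rw [l1, l2] at hc
    rw [pd_mul (hdiff 0 0 x) (diff_coord 1 x) 1, pd_coord, h00 1 x, pd_const] at hc
    simpa using hc
  -- partials of g₁₀ and g₁₁
  have h10_1 : ∀ x, pd 1 (fun y => g y 1 0) x = 0 := by
    intro x
    have := hkey 1 1 0 x
    rw [E0 1 x, E11 x] at this
    simpa using this
  have h11_1 : ∀ x, pd 1 (fun y => g y 1 1) x = 0 := by
    intro x
    have := hkey 1 1 1 x
    rw [E11 x] at this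
    simpa using this
  have h11_2 : ∀ x, pd 2 (fun y => g y 1 1) x = g x 1 0 * x 1 + g x 1 0 * x 1 := by
    intro x
    have := hkey 2 1 1 x
    rw [E21 x] at this
    simpa using this
  -- Clairaut on g₁₁ gives g₁₀ = 0
  have hB : ∀ x, g x 1 0 = 0 := by
    intro x
    have hc := pd_comm (hs 1 1) 1 2 x
    have l1 : (fun y => pd 2 (fun z => g z 1 1) y)
        = fun y => g y 1 0 * y 1 + g y 1 0 * y 1 := funext h11_2
    have l2 : (fun y => pd 1 (fun z => g z 1 1) y) = fun _ => (0 : ℝ) := funext h11_1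
    rw [l1, l2] at hc
    rw [pd_add ((hdiff 1 0 x).fun_mul (diff_coord 1 x)) ((hdiff 1 0 x).fun_mul (diff_coord 1 x)) 1,
      pd_mul (hdiff 1 0 x) (diff_coord 1 x) 1, pd_coord, h10_1 x, pd_const] at hc
    simp at hc
    linarith
  -- partials of g₁₂ and g₂₀
  have h12_1 : ∀ x, pd 1 (fun y => g y 1 2) x = 0 := by
    intro x
    have := hkey 1 1 2 x
    rw [E11 x, E12 x, hB x] at this
    simpa using this
  have h12_2 : ∀ x, pd 2 (fun y => g y 1 2) x = g x 2 0 * x 1 := by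
    intro x
    have := hkey 2 1 2 x
    rw [E21 x, E22 x, hB x] at this
    simpa using this
  have h20_1 : ∀ x, pd 1 (fun y => g y 2 0) x = 0 := by
    intro x
    have := hkey 1 2 0 x
    rw [E0 1 x, E12 x, hA x] at this
    simpa using this
  -- Clairaut on g₁₂ gives g₂₀ = 0
  have hC2 : ∀ x, g x 2 0 = 0 := by
    intro x
    have hc := pd_comm (hs 1 2) 1 2 x
    have l1 : (fun y => pd 2 (fun z => g z 1 2) y) = fun y => g y 2 0 * y 1 := funext h12_2
    have l2 : (fun y => pd 1 (fun z => g z 1 2) y) = fun _ => (0 : ℝ) := funext h12_1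
    rw [l1, l2] at hc
    rw [pd_mul (hdiff 2 0 x) (diff_coord 1 x) 1, pd_coord, h20_1 x, pd_const] at hc
    simpa using hc
  -- the first column of g vanishes, contradicting nondegeneracy
  have : (g 0).det = 0 := by
    apply Matrix.det_eq_zero_of_column_eq_zero 0
    intro i
    fin_cases i
    · exact hA 0
    · exact hB 0
    · exact hC2 0
  exact hdet 0 this
end
end

section
/- The vector fields ∂_x, ∂_y, e^y(∂_z − z∂_x), e^{−y}(∂_z + z∂_x), ∂_{u_i}, u_i∂_x − y∂_{u_i}, and u_i∂_{u_j} − u_j∂_{u_i} are Killing vector fields of the metric g = 2dx dy + z²dy² + dz² + Σ_{i=4}^n du_i² on ℝⁿ, and they are linearly independent, giving dim I(g) ≥ (n² − 3n + 8)/2. -/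
noncomputable section

open scoped BigOperators

/-- The Lorentzian pp-wave metric `g = 2dx dy + z²dy² + dz² + Σ_{i≥4} du_i²`
on ℝⁿ, in coordinates `(x,y,z,u₄,…,u_n)` indexed `0,1,2,3,…,n−1`. -/
def gpp (n : ℕ) (x : Fin n → ℝ) : Matrix (Fin n) (Fin n) ℝ := fun i j =>
  if ((i : ℕ) = 0 ∧ (j : ℕ) = 1) ∨ ((i : ℕ) = 1 ∧ (j : ℕ) = 0) then 1
  else if (i : ℕ) = 1 ∧ (j : ℕ) = 1 then (co 2 x)^2
  else if i = j ∧ 2 ≤ (i : ℕ) then 1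
  else 0

/-- Index type for the listed Killing fields of the pp-wave metric:
`∂_x, ∂_y, e^y(∂_z − z∂_x), e^{−y}(∂_z + z∂_x)`; then `∂_{u_i}`;
then `u_i∂_x − y∂_{u_i}`; then the rotations `u_i∂_{u_j} − u_j∂_{u_i}` (`i < j`). -/
def ppKillIdx (n : ℕ) : Type :=
  Fin 4 ⊕ {i : Fin n // 3 ≤ (i : ℕ)} ⊕ {i : Fin n // 3 ≤ (i : ℕ)} ⊕
    {p : Fin n × Fin n // 3 ≤ (p.1 : ℕ) ∧ (p.1 : ℕ) < (p.2 : ℕ)}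

/-- The family of Killing fields of the pp-wave metric listed in the paper. -/
def ppKill (n : ℕ) : ppKillIdx n → Fin n → (Fin n → ℝ) → ℝ
  | Sum.inl ⟨0, _⟩ => fun k _ => if (k : ℕ) = 0 then 1 else 0
  | Sum.inl ⟨1, _⟩ => fun k _ => if (k : ℕ) = 1 then 1 else 0
  | Sum.inl ⟨2, _⟩ => fun k x =>
      if (k : ℕ) = 2 then Real.exp (co 1 x)
      else if (k : ℕ) = 0 then -(co 2 x) * Real.exp (co 1 x) else 0
  | Sum.inl ⟨_+3, _⟩ => fun k x =>
      if (k : ℕ) = 2 then Real.exp (-(co 1 x))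
      else if (k : ℕ) = 0 then (co 2 x) * Real.exp (-(co 1 x)) else 0
  | Sum.inr (Sum.inl ⟨i, _⟩) => fun k _ => if k = i then 1 else 0
  | Sum.inr (Sum.inr (Sum.inl ⟨i, _⟩)) => fun k x =>
      if (k : ℕ) = 0 then x i else if k = i then -(co 1 x) else 0
  | Sum.inr (Sum.inr (Sum.inr ⟨(i, j), _⟩)) => fun k x =>
      if k = j then x i else if k = i then -(x j) else 0

namespace GppHelper
variable {n : ℕ}

lemma pd_const (i : Fin n) (c : ℝ) (x : Fin n → ℝ) : pd i (fun _ => c) x = 0 := by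
  simp [pd]

lemma pd_apply (i : Fin n) (m : Fin n) (x : Fin n → ℝ) :
    pd i (fun y => y m) x = if m = i then 1 else 0 := by
  rw [pd, (hasFDerivAt_apply m x).fderiv]
  simp [ContinuousLinearMap.proj_apply, Pi.single_apply]

lemma co_eq {m : ℕ} (hm : m < n) : (co m : (Fin n → ℝ) → ℝ) = fun y => y ⟨m, hm⟩ := by
  funext y; simp [co, hm]

lemma diff_co (m : ℕ) (x : Fin n → ℝ) : DifferentiableAt ℝ (co (n := n) m) x := by
  by_cases h : m < n
  · rw [co_eq h]; exact (hasFDerivAt_apply (⟨m, h⟩ : Fin n) x).differentiableAt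
  · have : (co m : (Fin n → ℝ) → ℝ) = fun _ => 0 := by funext y; simp [co, h]
    rw [this]; exact differentiableAt_const 0

lemma pd_co {m : ℕ} (hm : m < n) (i : Fin n) (x : Fin n → ℝ) :
    pd i (co m) x = if (i : ℕ) = m then 1 else 0 := by
  rw [co_eq hm, pd_apply]
  simp [Fin.ext_iff, eq_comm]

lemma pd_mul (i : Fin n) (f g : (Fin n → ℝ) → ℝ) (x : Fin n → ℝ)
    (hf : DifferentiableAt ℝ f x) (hg : DifferentiableAt ℝ g x) :
    pd i (fun y => f y * g y) x = pd i f x * g x + f x * pd i g x := by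
  simp only [pd, fderiv_fun_mul hf hg, ContinuousLinearMap.add_apply,
    ContinuousLinearMap.smul_apply, smul_eq_mul]
  ring

lemma pd_exp (i : Fin n) (f : (Fin n → ℝ) → ℝ) (x : Fin n → ℝ)
    (hf : DifferentiableAt ℝ f x) :
    pd i (fun y => Real.exp (f y)) x = Real.exp (f x) * pd i f x := by
  simp only [pd, fderiv_exp hf, ContinuousLinearMap.smul_apply, smul_eq_mul]

lemma pd_neg (i : Fin n) (f : (Fin n → ℝ) → ℝ) (x : Fin n → ℝ) :
    pd i (fun y => -(f y)) x = -(pd i f x) := by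
  simp only [pd, fderiv_fun_neg, ContinuousLinearMap.neg_apply]

lemma gpp_row {a b : Fin n} (ha : 2 ≤ (a : ℕ)) (x : Fin n → ℝ) :
    gpp n x a b = if (a : ℕ) = (b : ℕ) then 1 else 0 := by
  simp only [gpp, Fin.ext_iff]
  split_ifs <;> first | rfl | (exfalso; omega)

lemma gpp_col {a b : Fin n} (hb : 2 ≤ (b : ℕ)) (x : Fin n → ℝ) :
    gpp n x a b = if (a : ℕ) = (b : ℕ) then 1 else 0 := by
  simp only [gpp, Fin.ext_iff]
  split_ifs <;> first | rfl | (exfalso; omega)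

lemma gpp_row0 {e0 b : Fin n} (h0 : (e0 : ℕ) = 0) (x : Fin n → ℝ) :
    gpp n x e0 b = if (b : ℕ) = 1 then 1 else 0 := by
  simp only [gpp, Fin.ext_iff]
  split_ifs <;> first | rfl | (exfalso; omega)

lemma gpp_col0 {a e0 : Fin n} (h0 : (e0 : ℕ) = 0) (x : Fin n → ℝ) :
    gpp n x a e0 = if (a : ℕ) = 1 then 1 else 0 := by
  simp only [gpp, Fin.ext_iff]
  split_ifs <;> first | rfl | (exfalso; omega)

lemma pd_gpp (hn : 2 < n) (k i j : Fin n) (x : Fin n → ℝ) :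
    pd k (fun y => gpp n y i j) x =
      if (i : ℕ) = 1 ∧ (j : ℕ) = 1 ∧ (k : ℕ) = 2 then 2 * co 2 x else 0 := by
  by_cases h : (i : ℕ) = 1 ∧ (j : ℕ) = 1
  · have he : (fun y => gpp n y i j) = fun y => co 2 y * co 2 y := by
      funext y
      simp only [gpp, Fin.ext_iff, sq]
      split_ifs <;> first | rfl | (exfalso; omega)
    rw [he, pd_mul _ _ _ _ (diff_co 2 x) (diff_co 2 x), pd_co hn]
    rcases h with ⟨h1, h2⟩
    by_cases hk : (k : ℕ) = 2 <;> simp [h1, h2, hk] <;> ring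
  · have he : (fun y => gpp n y i j) = fun _ => gpp n x i j := by
      funext y
      simp only [gpp]
      split_ifs with h1 h2 <;> first | rfl | exact absurd h2 h
    rw [he, pd_const, if_neg (by rintro ⟨h1, h2, _⟩; exact h ⟨h1, h2⟩)]

lemma sum1 (hn : 2 < n) {e2 : Fin n} (h2 : (e2 : ℕ) = 2)
    (v : Fin n → (Fin n → ℝ) → ℝ) (i j : Fin n) (x : Fin n → ℝ) :
    ∑ k, v k x * pd k (fun y => gpp n y i j) x =
      if (i : ℕ) = 1 ∧ (j : ℕ) = 1 then v e2 x * (2 * co 2 x) else 0 := by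
  simp only [pd_gpp hn]
  by_cases h : (i : ℕ) = 1 ∧ (j : ℕ) = 1
  · rw [if_pos h]
    rw [show (∑ k : Fin n, v k x * if (i:ℕ) = 1 ∧ (j:ℕ) = 1 ∧ (k : ℕ) = 2 then 2 * co 2 x else 0)
        = ∑ k : Fin n, if k = e2 then v k x * (2 * co 2 x) else 0 from
      Finset.sum_congr rfl fun k _ => by
        by_cases hk : k = e2
        · subst hk; rw [if_pos rfl, if_pos ⟨h.1, h.2, h2⟩]
        · rw [if_neg hk, if_neg (by rintro ⟨-, -, hv⟩; exact hk (Fin.ext (by omega))), mul_zero]]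
    simp
  · rw [if_neg h]
    refine Finset.sum_eq_zero fun k _ => ?_
    rw [if_neg (by rintro ⟨h1, hh2, -⟩; exact h ⟨h1, hh2⟩), mul_zero]

lemma sum_two {a b : Fin n} (hab : a ≠ b) (f : Fin n → ℝ) (A B : ℝ) :
    (∑ k, f k * (if k = a then A else if k = b then B else 0)) = f a * A + f b * B := by
  rw [show (∑ k, f k * (if k = a then A else if k = b then B else 0))
      = ∑ k, ((if k = a then f k * A else 0) + (if k = b then f k * B else 0)) from
    Finset.sum_congr rfl fun k _ => by
      by_cases h1 : k = a
      · subst h1; simp [hab]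
      · by_cases hk2 : k = b
        · subst hk2; simp [h1]
        · simp [h1, hk2]]
  rw [Finset.sum_add_distrib]
  simp

lemma sum_one {a : Fin n} (f : Fin n → ℝ) (A : ℝ) :
    (∑ k, f k * (if k = a then A else 0)) = f a * A := by
  rw [show (∑ k, f k * (if k = a then A else 0))
      = ∑ k, (if k = a then f k * A else 0) from
    Finset.sum_congr rfl fun k _ => by by_cases h1 : k = a <;> simp [h1]]
  simp

/-- generic "exp-type" killing field computation:
v k x = if (k:ℕ)=2 then exp(ε·y) else if (k:ℕ)=0 then (-ε)·z·exp(ε·y) else 0, ε = ±1. -/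
lemma killing_exp (hn : 3 ≤ n) (ε : ℝ) (hε : ε * ε = 1)
    (v : Fin n → (Fin n → ℝ) → ℝ)
    (hv : ∀ k x, v k x = if (k : ℕ) = 2 then Real.exp (ε * co 1 x)
      else if (k : ℕ) = 0 then -ε * co 2 x * Real.exp (ε * co 1 x) else 0)
    (i j : Fin n) (x : Fin n → ℝ) :
    lieMetric v (gpp n) i j x = 0 := by
  have h2n : 2 < n := by omega
  set e0 : Fin n := ⟨0, by omega⟩ with he0
  set e2 : Fin n := ⟨2, by omega⟩ with he2
  have h0 : (e0 : ℕ) = 0 := rfl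
  have h2 : (e2 : ℕ) = 2 := rfl
  have hne : e2 ≠ e0 := by
    intro h; have := congrArg Fin.val h; rw [h0, h2] at this; omega
  have hdexp : ∀ y : Fin n → ℝ, DifferentiableAt ℝ (fun w => ε * co 1 w) y := fun y =>
    (differentiableAt_const ε).mul (diff_co 1 y)
  -- derivative of each component
  have pdv : ∀ (m k : Fin n) (x : Fin n → ℝ), pd m (v k) x =
      if k = e2 then Real.exp (ε * co 1 x) * (ε * (if (m : ℕ) = 1 then 1 else 0))
      else if k = e0 then
        -ε * (if (m : ℕ) = 2 then 1 else 0) * Real.exp (ε * co 1 x)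
          + -ε * co 2 x * (Real.exp (ε * co 1 x) * (ε * (if (m : ℕ) = 1 then 1 else 0)))
      else 0 := by
    intro m k x
    have pdec : ∀ (m : Fin n) (x : Fin n → ℝ),
        pd m (fun w => Real.exp (ε * co 1 w)) x
          = Real.exp (ε * co 1 x) * (ε * (if (m : ℕ) = 1 then 1 else 0)) := by
      intro m x
      rw [pd_exp _ _ _ (hdexp x)]
      congr 1
      have : (fun w : Fin n → ℝ => ε * co 1 w) = fun w => (fun _ => ε) w * co 1 w := rfl
      rw [this, pd_mul _ _ _ _ (differentiableAt_const ε) (diff_co 1 x), pd_const, pd_co (by omega)]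
      ring
    by_cases hk2 : k = e2
    · subst hk2
      rw [if_pos rfl]
      have : v e2 = fun w => Real.exp (ε * co 1 w) := by
        funext w; rw [hv, if_pos h2]
      rw [this, pdec]
    · rw [if_neg hk2]
      by_cases hk0 : k = e0
      · subst hk0
        rw [if_pos rfl]
        have : v e0 = fun w => -ε * co 2 w * Real.exp (ε * co 1 w) := by
          funext w; rw [hv, if_neg (by rw [h0]; omega), if_pos h0]
        rw [this]
        have hre : (fun w : Fin n → ℝ => -ε * co 2 w * Real.exp (ε * co 1 w))
            = fun w => ((fun u => -ε * co 2 u) w) * ((fun u => Real.exp (ε * co 1 u)) w) := rfl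
        rw [hre, pd_mul _ (fun u => -ε * co 2 u) (fun u => Real.exp (ε * co 1 u)) _ (((differentiableAt_const (-ε)).mul (diff_co 2 x)))
          ((hdexp x).exp), pdec]
        have : pd m (fun u => -ε * co 2 u) x = -ε * (if (m : ℕ) = 2 then 1 else 0) := by
          have : (fun u : Fin n → ℝ => -ε * co 2 u) = fun u => (fun _ => -ε) u * co 2 u := rfl
          rw [this, pd_mul _ _ _ _ (differentiableAt_const (-ε)) (diff_co 2 x), pd_const,
            pd_co (by omega)]
          ring
        rw [this]
      · rw [if_neg hk0]
        have : v k = fun _ => 0 := by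
          funext w
          rw [hv, if_neg (by intro h; exact hk2 (Fin.ext (by omega))),
            if_neg (by intro h; exact hk0 (Fin.ext (by omega)))]
        rw [this, pd_const]
  -- split the sum
  rw [lieMetric]
  rw [show (∑ k, (v k x * pd k (fun y => gpp n y i j) x
        + gpp n x k j * pd i (v k) x + gpp n x i k * pd j (v k) x))
      = (∑ k, v k x * pd k (fun y => gpp n y i j) x)
        + ((∑ k, gpp n x k j * pd i (v k) x) + (∑ k, gpp n x i k * pd j (v k) x)) by
    rw [← Finset.sum_add_distrib, ← Finset.sum_add_distrib]
    exact Finset.sum_congr rfl fun k _ => by ring]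
  rw [sum1 h2n h2 v i j x]
  simp only [pdv]
  rw [sum_two hne (fun k => gpp n x k j), sum_two hne (fun k => gpp n x i k)]
  rw [hv e2 x, if_pos h2]
  rw [gpp_row (by omega : 2 ≤ (e2 : ℕ)) x, gpp_col (by omega : 2 ≤ (e2 : ℕ)) x,
    gpp_row0 h0, gpp_col0 h0, h2]
  split_ifs <;>
    first
      | (exfalso; omega)
      | ring1
      | linear_combination (Real.exp (ε * co 1 x) * co 2 x * 2) * hε
      | linear_combination (-(Real.exp (ε * co 1 x) * co 2 x * 2)) * hε

lemma lie_split (v : Fin n → (Fin n → ℝ) → ℝ) (i j : Fin n) (x : Fin n → ℝ) :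
    lieMetric v (gpp n) i j x
      = (∑ k, v k x * pd k (fun y => gpp n y i j) x)
        + ((∑ k, gpp n x k j * pd i (v k) x) + (∑ k, gpp n x i k * pd j (v k) x)) := by
  rw [lieMetric, ← Finset.sum_add_distrib, ← Finset.sum_add_distrib]
  exact Finset.sum_congr rfl fun k _ => by ring

lemma killing_const (hn : 3 ≤ n) (a : Fin n) (ha : (a : ℕ) ≠ 2)
    (v : Fin n → (Fin n → ℝ) → ℝ)
    (hv : ∀ k x, v k x = if k = a then 1 else 0)
    (i j : Fin n) (x : Fin n → ℝ) :
    lieMetric v (gpp n) i j x = 0 := by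
  have h2n : 2 < n := by omega
  set e2 : Fin n := ⟨2, by omega⟩ with he2
  have h2 : (e2 : ℕ) = 2 := rfl
  have pdv : ∀ (m k : Fin n) (x : Fin n → ℝ), pd m (v k) x = 0 := by
    intro m k x
    have : v k = fun _ => if k = a then (1:ℝ) else 0 := by funext w; rw [hv]
    rw [this, pd_const]
  rw [lie_split, sum1 h2n h2]
  have hva : v e2 x = 0 := by
    rw [hv, if_neg]; intro h; apply ha; rw [h] at h2; omega
  simp [pdv, hva]

lemma killing_lin (hn : 3 ≤ n) (w : Fin n) (hw : 3 ≤ (w : ℕ))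
    (v : Fin n → (Fin n → ℝ) → ℝ)
    (hv : ∀ k x, v k x = if (k : ℕ) = 0 then x w else if k = w then -(co 1 x) else 0)
    (i j : Fin n) (x : Fin n → ℝ) :
    lieMetric v (gpp n) i j x = 0 := by
  have h2n : 2 < n := by omega
  set e0 : Fin n := ⟨0, by omega⟩ with he0
  set e2 : Fin n := ⟨2, by omega⟩ with he2
  have h0 : (e0 : ℕ) = 0 := rfl
  have h2 : (e2 : ℕ) = 2 := rfl
  have hne : e0 ≠ w := by intro h; rw [← h] at hw; omega
  have pdv : ∀ (m k : Fin n) (x : Fin n → ℝ), pd m (v k) x =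
      if k = e0 then (if w = m then 1 else 0)
      else if k = w then -(if (m : ℕ) = 1 then 1 else 0) else 0 := by
    intro m k x
    by_cases hk0 : k = e0
    · subst hk0
      rw [if_pos rfl]
      have : v e0 = fun y => y w := by funext y; rw [hv, if_pos h0]
      rw [this, pd_apply]
    · rw [if_neg hk0]
      by_cases hkw : k = w
      · subst hkw
        rw [if_pos rfl]
        have : v k = fun y => -(co 1 y) := by
          funext y; rw [hv, if_neg (fun h => hk0 (Fin.ext (by omega))), if_pos rfl]
        rw [this, pd_neg, pd_co (by omega)]
      · rw [if_neg hkw]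
        have : v k = fun _ => 0 := by
          funext y
          rw [hv, if_neg (fun h => hk0 (Fin.ext (by omega))), if_neg hkw]
        rw [this, pd_const]
  rw [lie_split, sum1 h2n h2]
  have hva : v e2 x = 0 := by
    rw [hv, if_neg (by rw [h2]; omega), if_neg (by intro h; rw [h] at h2; omega)]
  simp only [pdv]
  rw [sum_two hne (fun k => gpp n x k j), sum_two hne (fun k => gpp n x i k)]
  rw [gpp_row0 h0, gpp_col0 h0, gpp_row (by omega : 2 ≤ (w:ℕ)), gpp_col (by omega : 2 ≤ (w:ℕ)),
    hva]
  simp only [Fin.ext_iff]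
  split_ifs <;> first | (exfalso; omega) | ring1

lemma killing_rot (hn : 3 ≤ n) (w1 w2 : Fin n) (hw1 : 3 ≤ (w1 : ℕ)) (hlt : (w1 : ℕ) < (w2 : ℕ))
    (v : Fin n → (Fin n → ℝ) → ℝ)
    (hv : ∀ k x, v k x = if k = w2 then x w1 else if k = w1 then -(x w2) else 0)
    (i j : Fin n) (x : Fin n → ℝ) :
    lieMetric v (gpp n) i j x = 0 := by
  have h2n : 2 < n := by omega
  set e2 : Fin n := ⟨2, by omega⟩ with he2
  have h2 : (e2 : ℕ) = 2 := rfl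
  have hne : w2 ≠ w1 := by intro h; rw [h] at hlt; omega
  have pdv : ∀ (m k : Fin n) (x : Fin n → ℝ), pd m (v k) x =
      if k = w2 then (if w1 = m then 1 else 0)
      else if k = w1 then -(if w2 = m then 1 else 0) else 0 := by
    intro m k x
    by_cases hk2 : k = w2
    · subst hk2
      rw [if_pos rfl]
      have : v k = fun y => y w1 := by funext y; rw [hv, if_pos rfl]
      rw [this, pd_apply]
    · rw [if_neg hk2]
      by_cases hk1 : k = w1
      · subst hk1
        rw [if_pos rfl]
        have : v k = fun y => -(y w2) := by funext y; rw [hv, if_neg hk2, if_pos rfl]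
        rw [this, pd_neg, pd_apply]
      · rw [if_neg hk1]
        have : v k = fun _ => 0 := by funext y; rw [hv, if_neg hk2, if_neg hk1]
        rw [this, pd_const]
  rw [lie_split, sum1 h2n h2]
  have hva : v e2 x = 0 := by
    rw [hv, if_neg (by intro h; rw [h] at h2; omega), if_neg (by intro h; rw [h] at h2; omega)]
  simp only [pdv]
  rw [sum_two hne (fun k => gpp n x k j), sum_two hne (fun k => gpp n x i k)]
  rw [gpp_row (by omega : 2 ≤ (w2:ℕ)), gpp_col (by omega : 2 ≤ (w2:ℕ)),
    gpp_row (by omega : 2 ≤ (w1:ℕ)), gpp_col (by omega : 2 ≤ (w1:ℕ)), hva]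
  simp only [Fin.ext_iff]
  split_ifs <;> first | (exfalso; omega) | ring1

lemma contDiff_co (m : ℕ) : ContDiff ℝ (⊤ : ℕ∞) (co (n := n) m) := by
  by_cases h : m < n
  · have : (co m : (Fin n → ℝ) → ℝ) = fun y => y ⟨m, h⟩ := by funext y; simp [co, h]
    rw [this]
    exact (ContinuousLinearMap.proj (R := ℝ) (φ := fun _ : Fin n => ℝ) ⟨m, h⟩).contDiff
  · have : (co m : (Fin n → ℝ) → ℝ) = fun _ => 0 := by funext y; simp [co, h]
    rw [this]; exact contDiff_const

lemma contDiff_proj (i : Fin n) : ContDiff ℝ (⊤ : ℕ∞) (fun y : Fin n → ℝ => y i) :=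
  (ContinuousLinearMap.proj (R := ℝ) (φ := fun _ : Fin n => ℝ) i).contDiff

lemma smooth_ppKill (idx : ppKillIdx n) : SmoothVF (ppKill n idx) := by
  have hexp : ContDiff ℝ (⊤ : ℕ∞) (fun x : Fin n → ℝ => Real.exp (co 1 x)) :=
    Real.contDiff_exp.comp (contDiff_co 1)
  have hexpn : ContDiff ℝ (⊤ : ℕ∞) (fun x : Fin n → ℝ => Real.exp (-(co 1 x))) :=
    Real.contDiff_exp.comp (contDiff_co 1).neg
  rcases idx with m | w | w | pq
  · rcases m with ⟨mv, hm⟩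
    interval_cases mv
    · intro k; by_cases hk : (k : ℕ) = 0 <;> simp only [ppKill, hk] <;> simp <;> exact contDiff_const
    · intro k; by_cases hk : (k : ℕ) = 1 <;> simp only [ppKill, hk] <;> simp <;> exact contDiff_const
    · intro k
      show ContDiff ℝ (⊤ : ℕ∞) fun x => if (k : ℕ) = 2 then Real.exp (co 1 x)
        else if (k : ℕ) = 0 then -(co 2 x) * Real.exp (co 1 x) else 0
      by_cases hk2 : (k : ℕ) = 2
      · simpa [hk2] using hexp
      · by_cases hk0 : (k : ℕ) = 0
        · simp only [hk2, hk0, if_false, if_true]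
          exact ((contDiff_co 2).neg.mul hexp)
        · simp [hk2, hk0]; exact contDiff_const
    · intro k
      show ContDiff ℝ (⊤ : ℕ∞) fun x => if (k : ℕ) = 2 then Real.exp (-(co 1 x))
        else if (k : ℕ) = 0 then (co 2 x) * Real.exp (-(co 1 x)) else 0
      by_cases hk2 : (k : ℕ) = 2
      · simpa [hk2] using hexpn
      · by_cases hk0 : (k : ℕ) = 0
        · simp only [hk2, hk0, if_false, if_true]
          exact ((contDiff_co 2).mul hexpn)
        · simp [hk2, hk0]; exact contDiff_const
  · obtain ⟨w, hw⟩ := w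
    intro k
    show ContDiff ℝ (⊤ : ℕ∞) fun _ : Fin n → ℝ => if k = w then (1:ℝ) else 0
    exact contDiff_const
  · obtain ⟨w, hw⟩ := w
    intro k
    show ContDiff ℝ (⊤ : ℕ∞) fun x : Fin n → ℝ => if (k : ℕ) = 0 then x w else if k = w then -(co 1 x) else 0
    by_cases hk0 : (k : ℕ) = 0
    · simpa [hk0] using contDiff_proj w
    · by_cases hkw : k = w
      · have : (fun x : Fin n → ℝ => if (k : ℕ) = 0 then x w else if k = w then -(co 1 x) else 0)
            = fun x => -(co 1 x) := by
          funext x; rw [if_neg hk0, if_pos hkw]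
        rw [this]; exact (contDiff_co 1).neg
      · have : (fun x : Fin n → ℝ => if (k : ℕ) = 0 then x w else if k = w then -(co 1 x) else 0)
            = fun _ => 0 := by
          funext x; rw [if_neg hk0, if_neg hkw]
        rw [this]; exact contDiff_const
  · obtain ⟨⟨p, q⟩, hpq⟩ := pq
    intro k
    show ContDiff ℝ (⊤ : ℕ∞) fun x : Fin n → ℝ => if k = q then x p else if k = p then -(x q) else 0
    by_cases hkq : k = q
    · simpa [hkq] using contDiff_proj p
    · by_cases hkp : k = p
      · have : (fun x : Fin n → ℝ => if k = q then x p else if k = p then -(x q) else 0)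
            = fun x => -(x q) := by
          funext x; rw [if_neg hkq, if_pos hkp]
        rw [this]; exact (contDiff_proj q).neg
      · have : (fun x : Fin n → ℝ => if k = q then x p else if k = p then -(x q) else 0)
            = fun _ => 0 := by
          funext x; rw [if_neg hkq, if_neg hkp]
        rw [this]; exact contDiff_const

lemma killing_all (hn : 3 ≤ n) (idx : ppKillIdx n) (i j : Fin n) (x : Fin n → ℝ) :
    lieMetric (ppKill n idx) (gpp n) i j x = 0 := by
  rcases idx with m | w | w | pq
  · rcases m with ⟨mv, hm⟩
    interval_cases mv
    · refine killing_const hn ⟨0, by omega⟩ (by simp) _ (fun k x => ?_) i j x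
      show (if (k : ℕ) = 0 then (1:ℝ) else 0) = _
      by_cases hk : (k : ℕ) = 0
      · rw [if_pos hk, if_pos (Fin.ext hk)]
      · rw [if_neg hk, if_neg (fun h => hk (by rw [h]))]
    · refine killing_const hn ⟨1, by omega⟩ (by simp) _ (fun k x => ?_) i j x
      show (if (k : ℕ) = 1 then (1:ℝ) else 0) = _
      by_cases hk : (k : ℕ) = 1
      · rw [if_pos hk, if_pos (Fin.ext hk)]
      · rw [if_neg hk, if_neg (fun h => hk (by rw [h]))]
    · refine killing_exp hn 1 (by norm_num) _ (fun k x => ?_) i j x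
      show (if (k : ℕ) = 2 then Real.exp (co 1 x)
        else if (k : ℕ) = 0 then -(co 2 x) * Real.exp (co 1 x) else 0) = _
      norm_num
    · refine killing_exp hn (-1) (by norm_num) _ (fun k x => ?_) i j x
      show (if (k : ℕ) = 2 then Real.exp (-(co 1 x))
        else if (k : ℕ) = 0 then (co 2 x) * Real.exp (-(co 1 x)) else 0) = _
      have e1 : (-1 : ℝ) * co 1 x = -(co 1 x) := by ring
      rw [e1]
      have e2 : -(-1 : ℝ) * co 2 x * Real.exp (-(co 1 x)) = co 2 x * Real.exp (-(co 1 x)) := by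
        ring
      rw [e2]
  · obtain ⟨w, hw⟩ := w
    exact killing_const hn w (by omega) _ (fun k x => rfl) i j x
  · obtain ⟨w, hw⟩ := w
    exact killing_lin hn w hw _ (fun k x => rfl) i j x
  · obtain ⟨⟨p, q⟩, hpq⟩ := pq
    exact killing_rot hn p q hpq.1 hpq.2 _ (fun k x => rfl) i j x

instance : DecidableEq (ppKillIdx n) := by unfold ppKillIdx; infer_instance
instance : Fintype (ppKillIdx n) := by unfold ppKillIdx; infer_instance
attribute [reducible] ppKillIdx

lemma co_zero (m : ℕ) : co m (0 : Fin n → ℝ) = 0 := by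
  unfold co; split <;> simp

lemma co_single {m : ℕ} (hm : m < n) (a : Fin n) :
    co m (Pi.single a (1:ℝ)) = if (a : ℕ) = m then 1 else 0 := by
  unfold co
  rw [dif_pos hm, Pi.single_apply]
  by_cases h : (a : ℕ) = m
  · rw [if_pos (Fin.ext h.symm : (⟨m, hm⟩ : Fin n) = a), if_pos h]
  · rw [if_neg (fun he => h (by rw [← he])), if_neg h]

lemma single_apply (a b : Fin n) : (Pi.single a (1:ℝ) : Fin n → ℝ) b = if b = a then 1 else 0 := by
  rw [Pi.single_apply]

-- constructor disjointness helpers at type ppKillIdx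
lemma ne_ll {a b : Fin 4} (h : a ≠ b) : (Sum.inl a : ppKillIdx n) ≠ Sum.inl b :=
  fun he => h (Sum.inl_injective he)
lemma ne_lr {a : Fin 4} {c} : (Sum.inl a : ppKillIdx n) ≠ Sum.inr c :=
  fun he => Sum.inl_ne_inr he
lemma ne_rl {a : Fin 4} {c} : (Sum.inr c : ppKillIdx n) ≠ Sum.inl a :=
  fun he => Sum.inr_ne_inl he
lemma ne_uu {s t : {i : Fin n // 3 ≤ (i : ℕ)}} (h : (s:Fin n) ≠ t) :
    (Sum.inr (Sum.inl s) : ppKillIdx n) ≠ Sum.inr (Sum.inl t) :=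
  fun he => h (Subtype.ext_iff.mp (Sum.inl_injective (Sum.inr_injective he)))
lemma ne_ul {s t} : (Sum.inr (Sum.inl s) : ppKillIdx n) ≠ Sum.inr (Sum.inr t) :=
  fun he => Sum.inl_ne_inr (Sum.inr_injective he)
lemma ne_lu {s t} : (Sum.inr (Sum.inr s) : ppKillIdx n) ≠ Sum.inr (Sum.inl t) :=
  fun he => Sum.inr_ne_inl (Sum.inr_injective he)
lemma ne_ee {s t : {i : Fin n // 3 ≤ (i : ℕ)}} (h : (s:Fin n) ≠ t) :
    (Sum.inr (Sum.inr (Sum.inl s)) : ppKillIdx n) ≠ Sum.inr (Sum.inr (Sum.inl t)) :=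
  fun he => h (Subtype.ext_iff.mp
    (Sum.inl_injective (Sum.inr_injective (Sum.inr_injective he))))
lemma ne_er {s t} : (Sum.inr (Sum.inr (Sum.inl s)) : ppKillIdx n) ≠ Sum.inr (Sum.inr (Sum.inr t)) :=
  fun he => Sum.inl_ne_inr (Sum.inr_injective (Sum.inr_injective he))
lemma ne_re {s t} : (Sum.inr (Sum.inr (Sum.inr s)) : ppKillIdx n) ≠ Sum.inr (Sum.inr (Sum.inl t)) :=
  fun he => Sum.inr_ne_inl (Sum.inr_injective (Sum.inr_injective he))
lemma ne_rr {s t : {p : Fin n × Fin n // 3 ≤ (p.1 : ℕ) ∧ (p.1 : ℕ) < (p.2 : ℕ)}}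
    (h : (s : Fin n × Fin n) ≠ t) :
    (Sum.inr (Sum.inr (Sum.inr s)) : ppKillIdx n) ≠ Sum.inr (Sum.inr (Sum.inr t)) :=
  fun he => h (Subtype.ext_iff.mp
    (Sum.inr_injective (Sum.inr_injective (Sum.inr_injective he))))

section Claims

/-- Claim 1: component 1, any x : isolates ∂y. -/
lemma claim1 (hn : 3 ≤ n) (x : Fin n → ℝ) (b : ppKillIdx n) :
    ppKill n b ⟨1, by omega⟩ x = if b = Sum.inl 1 then 1 else 0 := by
  rcases b with ⟨mv, hm⟩ | ⟨w, hw⟩ | ⟨w, hw⟩ | ⟨⟨p, q⟩, hpq⟩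
  · interval_cases mv
    · rw [if_neg (ne_ll (fun he => absurd (congrArg Fin.val he) (by norm_num : ¬((0:ℕ) = 1))))]
      show (if ((⟨1, by omega⟩ : Fin n) : ℕ) = 0 then (1:ℝ) else 0) = 0
      norm_num
    · rw [if_pos (congrArg Sum.inl (Fin.ext rfl : (⟨1, hm⟩ : Fin 4) = 1))]
      show (if ((⟨1, by omega⟩ : Fin n) : ℕ) = 1 then (1:ℝ) else 0) = 1
      norm_num
    · rw [if_neg (ne_ll (fun he => absurd (congrArg Fin.val he) (by norm_num : ¬((2:ℕ) = 1))))]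
      show (if ((⟨1, by omega⟩ : Fin n) : ℕ) = 2 then Real.exp (co 1 x)
        else if ((⟨1, by omega⟩ : Fin n) : ℕ) = 0 then -(co 2 x) * Real.exp (co 1 x) else 0) = 0
      norm_num
    · rw [if_neg (ne_ll (fun he => absurd (congrArg Fin.val he) (by norm_num : ¬((3:ℕ) = 1))))]
      show (if ((⟨1, by omega⟩ : Fin n) : ℕ) = 2 then Real.exp (-(co 1 x))
        else if ((⟨1, by omega⟩ : Fin n) : ℕ) = 0 then (co 2 x) * Real.exp (-(co 1 x)) else 0) = 0
      norm_num
  · rw [if_neg ne_rl]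
    show (if (⟨1, by omega⟩ : Fin n) = w then (1:ℝ) else 0) = 0
    rw [if_neg (fun h => by have h2 : (1:ℕ) = (w:ℕ) := congrArg Fin.val h; omega)]
  · rw [if_neg ne_rl]
    show (if ((⟨1, by omega⟩ : Fin n) : ℕ) = 0 then x w
      else if (⟨1, by omega⟩ : Fin n) = w then -(co 1 x) else 0) = 0
    rw [if_neg (by norm_num), if_neg (fun h => by
      have h2 : (1:ℕ) = (w:ℕ) := congrArg Fin.val h; omega)]
  · have hpq' : 3 ≤ (p:ℕ) ∧ (p:ℕ) < (q:ℕ) := hpq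
    rw [if_neg ne_rl]
    show (if (⟨1, by omega⟩ : Fin n) = q then x p
      else if (⟨1, by omega⟩ : Fin n) = p then -(x q) else 0) = 0
    rw [if_neg (fun h => by
        have h2 : (1:ℕ) = (q:ℕ) := congrArg Fin.val h
        exact absurd hpq'.2 (by omega)),
      if_neg (fun h => by
        have h2 : (1:ℕ) = (p:ℕ) := congrArg Fin.val h
        exact absurd hpq'.1 (by omega))]

/-- Claim 2: component 2, any x : isolates the two exp fields. -/
lemma claim2 (hn : 3 ≤ n) (x : Fin n → ℝ) (b : ppKillIdx n) :
    ppKill n b ⟨2, by omega⟩ x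
      = (if b = Sum.inl 2 then Real.exp (co 1 x) else 0)
        + (if b = Sum.inl 3 then Real.exp (-(co 1 x)) else 0) := by
  rcases b with ⟨mv, hm⟩ | ⟨w, hw⟩ | ⟨w, hw⟩ | ⟨⟨p, q⟩, hpq⟩
  · interval_cases mv
    · rw [if_neg (ne_ll (fun he => absurd (congrArg Fin.val he) (by norm_num : ¬((0:ℕ) = 2)))),
        if_neg (ne_ll (fun he => absurd (congrArg Fin.val he) (by norm_num : ¬((0:ℕ) = 3))))]
      show (if ((⟨2, by omega⟩ : Fin n) : ℕ) = 0 then (1:ℝ) else 0) = 0 + 0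
      norm_num
    · rw [if_neg (ne_ll (fun he => absurd (congrArg Fin.val he) (by norm_num : ¬((1:ℕ) = 2)))),
        if_neg (ne_ll (fun he => absurd (congrArg Fin.val he) (by norm_num : ¬((1:ℕ) = 3))))]
      show (if ((⟨2, by omega⟩ : Fin n) : ℕ) = 1 then (1:ℝ) else 0) = 0 + 0
      norm_num
    · rw [if_pos (congrArg Sum.inl (Fin.ext rfl : (⟨2, hm⟩ : Fin 4) = 2)),
        if_neg (ne_ll (fun he => absurd (congrArg Fin.val he) (by norm_num : ¬((2:ℕ) = 3))))]
      show (if ((⟨2, by omega⟩ : Fin n) : ℕ) = 2 then Real.exp (co 1 x)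
        else if ((⟨2, by omega⟩ : Fin n) : ℕ) = 0 then -(co 2 x) * Real.exp (co 1 x) else 0)
        = Real.exp (co 1 x) + 0
      norm_num
    · rw [if_neg (ne_ll (fun he => absurd (congrArg Fin.val he) (by norm_num : ¬((3:ℕ) = 2)))),
        if_pos (congrArg Sum.inl (Fin.ext rfl : (⟨3, hm⟩ : Fin 4) = 3))]
      show (if ((⟨2, by omega⟩ : Fin n) : ℕ) = 2 then Real.exp (-(co 1 x))
        else if ((⟨2, by omega⟩ : Fin n) : ℕ) = 0 then (co 2 x) * Real.exp (-(co 1 x)) else 0)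
        = 0 + Real.exp (-(co 1 x))
      norm_num
  · rw [if_neg ne_rl, if_neg ne_rl]
    show (if (⟨2, by omega⟩ : Fin n) = w then (1:ℝ) else 0) = 0 + 0
    rw [if_neg (fun h => by have h2 : (2:ℕ) = (w:ℕ) := congrArg Fin.val h; omega)]
    norm_num
  · rw [if_neg ne_rl, if_neg ne_rl]
    show (if ((⟨2, by omega⟩ : Fin n) : ℕ) = 0 then x w
      else if (⟨2, by omega⟩ : Fin n) = w then -(co 1 x) else 0) = 0 + 0
    rw [if_neg (by norm_num),
      if_neg (fun h => by have h2 : (2:ℕ) = (w:ℕ) := congrArg Fin.val h; omega)]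
    norm_num
  · have hpq' : 3 ≤ (p:ℕ) ∧ (p:ℕ) < (q:ℕ) := hpq
    rw [if_neg ne_rl, if_neg ne_rl]
    show (if (⟨2, by omega⟩ : Fin n) = q then x p
      else if (⟨2, by omega⟩ : Fin n) = p then -(x q) else 0) = 0 + 0
    rw [if_neg (fun h => by
        have h2 : (2:ℕ) = (q:ℕ) := congrArg Fin.val h
        exact absurd hpq'.2 (by omega)),
      if_neg (fun h => by
        have h2 : (2:ℕ) = (p:ℕ) := congrArg Fin.val h
        exact absurd hpq'.1 (by omega))]
    norm_num

/-- Claim 3: component 0 at x = 0 : isolates ∂x. -/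
lemma claim3 (hn : 3 ≤ n) (b : ppKillIdx n) :
    ppKill n b ⟨0, by omega⟩ (0 : Fin n → ℝ) = if b = Sum.inl 0 then 1 else 0 := by
  rcases b with ⟨mv, hm⟩ | ⟨w, hw⟩ | ⟨w, hw⟩ | ⟨⟨p, q⟩, hpq⟩
  · interval_cases mv
    · rw [if_pos (congrArg Sum.inl (Fin.ext rfl : (⟨0, hm⟩ : Fin 4) = 0))]
      show (if ((⟨0, by omega⟩ : Fin n) : ℕ) = 0 then (1:ℝ) else 0) = 1
      norm_num
    · rw [if_neg (ne_ll (fun he => absurd (congrArg Fin.val he) (by norm_num : ¬((1:ℕ) = 0))))]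
      show (if ((⟨0, by omega⟩ : Fin n) : ℕ) = 1 then (1:ℝ) else 0) = 0
      norm_num
    · rw [if_neg (ne_ll (fun he => absurd (congrArg Fin.val he) (by norm_num : ¬((2:ℕ) = 0))))]
      show (if ((⟨0, by omega⟩ : Fin n) : ℕ) = 2 then Real.exp (co 1 (0 : Fin n → ℝ))
        else if ((⟨0, by omega⟩ : Fin n) : ℕ) = 0
          then -(co 2 (0 : Fin n → ℝ)) * Real.exp (co 1 (0 : Fin n → ℝ)) else 0) = 0
      norm_num [co_zero]
    · rw [if_neg (ne_ll (fun he => absurd (congrArg Fin.val he) (by norm_num : ¬((3:ℕ) = 0))))]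
      show (if ((⟨0, by omega⟩ : Fin n) : ℕ) = 2 then Real.exp (-(co 1 (0 : Fin n → ℝ)))
        else if ((⟨0, by omega⟩ : Fin n) : ℕ) = 0
          then (co 2 (0 : Fin n → ℝ)) * Real.exp (-(co 1 (0 : Fin n → ℝ))) else 0) = 0
      norm_num [co_zero]
  · rw [if_neg ne_rl]
    show (if (⟨0, by omega⟩ : Fin n) = w then (1:ℝ) else 0) = 0
    rw [if_neg (fun h => by have h2 : (0:ℕ) = (w:ℕ) := congrArg Fin.val h; omega)]
  · rw [if_neg ne_rl]
    show (if ((⟨0, by omega⟩ : Fin n) : ℕ) = 0 then (0 : Fin n → ℝ) w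
      else if (⟨0, by omega⟩ : Fin n) = w then -(co 1 (0 : Fin n → ℝ)) else 0) = 0
    rw [if_pos rfl]; rfl
  · have hpq' : 3 ≤ (p:ℕ) ∧ (p:ℕ) < (q:ℕ) := hpq
    rw [if_neg ne_rl]
    show (if (⟨0, by omega⟩ : Fin n) = q then (0 : Fin n → ℝ) p
      else if (⟨0, by omega⟩ : Fin n) = p then -((0 : Fin n → ℝ) q) else 0) = 0
    rw [if_neg (fun h => by
        have h2 : (0:ℕ) = (q:ℕ) := congrArg Fin.val h
        exact absurd hpq'.2 (by omega)),
      if_neg (fun h => by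
        have h2 : (0:ℕ) = (p:ℕ) := congrArg Fin.val h
        exact absurd hpq'.1 (by omega))]

/-- Claim 4: component w0 at x = 0 : isolates ∂_{u_{w0}}. -/
lemma claim4 (w0 : Fin n) (hw0 : 3 ≤ (w0 : ℕ)) (b : ppKillIdx n) :
    ppKill n b w0 (0 : Fin n → ℝ)
      = if b = Sum.inr (Sum.inl ⟨w0, hw0⟩) then 1 else 0 := by
  rcases b with ⟨mv, hm⟩ | ⟨w, hw⟩ | ⟨w, hw⟩ | ⟨⟨p, q⟩, hpq⟩
  · rw [if_neg ne_lr]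
    interval_cases mv
    · show (if (w0 : ℕ) = 0 then (1:ℝ) else 0) = 0
      rw [if_neg (by omega)]
    · show (if (w0 : ℕ) = 1 then (1:ℝ) else 0) = 0
      rw [if_neg (by omega)]
    · show (if (w0 : ℕ) = 2 then Real.exp (co 1 (0 : Fin n → ℝ))
        else if (w0 : ℕ) = 0
          then -(co 2 (0 : Fin n → ℝ)) * Real.exp (co 1 (0 : Fin n → ℝ)) else 0) = 0
      rw [if_neg (by omega), if_neg (by omega)]
    · show (if (w0 : ℕ) = 2 then Real.exp (-(co 1 (0 : Fin n → ℝ)))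
        else if (w0 : ℕ) = 0
          then (co 2 (0 : Fin n → ℝ)) * Real.exp (-(co 1 (0 : Fin n → ℝ))) else 0) = 0
      rw [if_neg (by omega), if_neg (by omega)]
  · show (if w0 = w then (1:ℝ) else 0) = _
    by_cases hww : w = w0
    · subst hww
      rw [if_pos rfl, if_pos rfl]
    · rw [if_neg (fun h => hww h.symm), if_neg (ne_uu (fun h : (w:Fin n) = w0 => hww h))]
  · rw [if_neg ne_lu]
    show (if (w0 : ℕ) = 0 then (0 : Fin n → ℝ) w
      else if w0 = w then -(co 1 (0 : Fin n → ℝ)) else 0) = 0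
    rw [if_neg (by omega)]
    by_cases hww : w0 = w
    · rw [if_pos hww, co_zero, neg_zero]
    · rw [if_neg hww]
  · rw [if_neg ne_lu]
    show (if w0 = q then (0 : Fin n → ℝ) p else if w0 = p then -((0 : Fin n → ℝ) q) else 0) = 0
    split_ifs <;> simp

/-- Claim 5: component w0 at x = single e1 1 : gives d - e relation. -/
lemma claim5 (hn : 3 ≤ n) (w0 : Fin n) (hw0 : 3 ≤ (w0 : ℕ)) (b : ppKillIdx n) :
    ppKill n b w0 (Pi.single (⟨1, by omega⟩ : Fin n) (1:ℝ))
      = (if b = Sum.inr (Sum.inl ⟨w0, hw0⟩) then 1 else 0)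
        + (if b = Sum.inr (Sum.inr (Sum.inl ⟨w0, hw0⟩)) then -1 else 0) := by
  set x1 : Fin n → ℝ := Pi.single (⟨1, by omega⟩ : Fin n) (1:ℝ) with hx1
  have hco1 : co 1 x1 = 1 := by
    rw [hx1, co_single (by omega)]; norm_num
  have hco2 : co 2 x1 = 0 := by
    rw [hx1, co_single (by omega)]; norm_num
  have happ : ∀ a : Fin n, 3 ≤ (a : ℕ) → x1 a = 0 := by
    intro a ha
    rw [hx1, single_apply, if_neg (fun h => by
      have h2 : (a:ℕ) = 1 := congrArg Fin.val h; omega)]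
  rcases b with ⟨mv, hm⟩ | ⟨w, hw⟩ | ⟨w, hw⟩ | ⟨⟨p, q⟩, hpq⟩
  · rw [if_neg ne_lr, if_neg ne_lr]
    interval_cases mv
    · show (if (w0 : ℕ) = 0 then (1:ℝ) else 0) = 0 + 0
      rw [if_neg (by omega)]; norm_num
    · show (if (w0 : ℕ) = 1 then (1:ℝ) else 0) = 0 + 0
      rw [if_neg (by omega)]; norm_num
    · show (if (w0 : ℕ) = 2 then Real.exp (co 1 x1)
        else if (w0 : ℕ) = 0 then -(co 2 x1) * Real.exp (co 1 x1) else 0) = 0 + 0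
      rw [if_neg (by omega), if_neg (by omega)]; norm_num
    · show (if (w0 : ℕ) = 2 then Real.exp (-(co 1 x1))
        else if (w0 : ℕ) = 0 then (co 2 x1) * Real.exp (-(co 1 x1)) else 0) = 0 + 0
      rw [if_neg (by omega), if_neg (by omega)]; norm_num
  · rw [if_neg ne_ul]
    show (if w0 = w then (1:ℝ) else 0) = _ + 0
    by_cases hww : w = w0
    · subst hww; rw [if_pos rfl, if_pos rfl]; norm_num
    · rw [if_neg (fun h => hww h.symm), if_neg (ne_uu (fun h : (w:Fin n) = w0 => hww h))]
      norm_num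
  · rw [if_neg ne_lu]
    show (if (w0 : ℕ) = 0 then x1 w
      else if w0 = w then -(co 1 x1) else 0) = 0 + _
    rw [if_neg (by omega)]
    by_cases hww : w = w0
    · subst hww; rw [if_pos rfl, if_pos rfl, hco1]; norm_num
    · rw [if_neg (fun h => hww h.symm), if_neg (ne_ee (fun h : (w:Fin n) = w0 => hww h))]
      norm_num
  · have hpq' : 3 ≤ (p:ℕ) ∧ (p:ℕ) < (q:ℕ) := hpq
    rw [if_neg ne_lu, if_neg ne_re]
    show (if w0 = q then x1 p else if w0 = p then -(x1 q) else 0) = 0 + 0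
    by_cases h1 : w0 = q
    · rw [if_pos h1, happ p (by omega)]; norm_num
    · rw [if_neg h1]
      by_cases h2 : w0 = p
      · rw [if_pos h2, happ q (by omega)]; norm_num
      · rw [if_neg h2]; norm_num

/-- Claim 6: component q0 at x = single p0 1 : gives the rotation relation. -/
lemma claim6 (hn : 3 ≤ n) (p0 q0 : Fin n) (h30 : 3 ≤ (p0 : ℕ)) (hlt0 : (p0 : ℕ) < (q0 : ℕ))
    (b : ppKillIdx n) :
    ppKill n b q0 (Pi.single p0 (1:ℝ))
      = (if b = Sum.inr (Sum.inl ⟨q0, by omega⟩) then 1 else 0)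
        + (if b = Sum.inr (Sum.inr (Sum.inr ⟨(p0, q0), ⟨h30, hlt0⟩⟩)) then 1 else 0) := by
  set xp : Fin n → ℝ := Pi.single p0 (1:ℝ) with hxp
  have hco1 : co 1 xp = 0 := by
    rw [hxp, co_single (by omega), if_neg (by omega)]
  have hco2 : co 2 xp = 0 := by
    rw [hxp, co_single (by omega), if_neg (by omega)]
  have happ : ∀ a : Fin n, a ≠ p0 → xp a = 0 := by
    intro a ha
    rw [hxp, single_apply, if_neg ha]
  have happ0 : xp p0 = 1 := by rw [hxp, single_apply, if_pos rfl]
  rcases b with ⟨mv, hm⟩ | ⟨w, hw⟩ | ⟨w, hw⟩ | ⟨⟨p, q⟩, hpq⟩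
  · rw [if_neg ne_lr, if_neg ne_lr]
    interval_cases mv
    · show (if (q0 : ℕ) = 0 then (1:ℝ) else 0) = 0 + 0
      rw [if_neg (by omega)]; norm_num
    · show (if (q0 : ℕ) = 1 then (1:ℝ) else 0) = 0 + 0
      rw [if_neg (by omega)]; norm_num
    · show (if (q0 : ℕ) = 2 then Real.exp (co 1 xp)
        else if (q0 : ℕ) = 0 then -(co 2 xp) * Real.exp (co 1 xp) else 0) = 0 + 0
      rw [if_neg (by omega), if_neg (by omega)]; norm_num
    · show (if (q0 : ℕ) = 2 then Real.exp (-(co 1 xp))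
        else if (q0 : ℕ) = 0 then (co 2 xp) * Real.exp (-(co 1 xp)) else 0) = 0 + 0
      rw [if_neg (by omega), if_neg (by omega)]; norm_num
  · rw [if_neg ne_ul]
    show (if q0 = w then (1:ℝ) else 0) = _ + 0
    by_cases hww : w = q0
    · subst hww; rw [if_pos rfl, if_pos rfl]; norm_num
    · rw [if_neg (fun h => hww h.symm), if_neg (ne_uu (fun h : (w:Fin n) = q0 => hww h))]
      norm_num
  · rw [if_neg ne_lu, if_neg ne_er]
    show (if (q0 : ℕ) = 0 then xp w
      else if q0 = w then -(co 1 xp) else 0) = 0 + 0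
    rw [if_neg (by omega)]
    by_cases hww : q0 = w
    · rw [if_pos hww, hco1, neg_zero]; norm_num
    · rw [if_neg hww]; norm_num
  · have hpq' : 3 ≤ (p:ℕ) ∧ (p:ℕ) < (q:ℕ) := hpq
    rw [if_neg ne_lu]
    show (if q0 = q then xp p else if q0 = p then -(xp q) else 0) = 0 + _
    by_cases hq : q = q0
    · rw [if_pos hq.symm]
      by_cases hp : p = p0
      · have he : (⟨(p, q), hpq⟩ : {r : Fin n × Fin n // 3 ≤ (r.1:ℕ) ∧ (r.1:ℕ) < (r.2:ℕ)})
            = ⟨(p0, q0), ⟨h30, hlt0⟩⟩ := Subtype.ext (Prod.ext_iff.mpr ⟨hp, hq⟩)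
        have hxpp : xp p = 1 := by rw [hp]; exact happ0
        rw [hxpp,
          if_pos (congrArg (fun t => (Sum.inr (Sum.inr (Sum.inr t)) : ppKillIdx n)) he)]
        norm_num
      · rw [happ p hp,
          if_neg (ne_rr (fun h : ((p, q) : Fin n × Fin n) = (p0, q0) => hp (congrArg Prod.fst h)))]
        norm_num
    · rw [if_neg (fun h => hq h.symm),
        if_neg (ne_rr (fun h : (p, q) = (p0, q0) => hq (congrArg Prod.snd h)))]
      by_cases hp : q0 = p
      · rw [if_pos hp, happ q (fun h : (q:Fin n) = p0 => by
          have h2 : (q:ℕ) = (p0:ℕ) := congrArg Fin.val h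
          have h3 : (q0:ℕ) = (p:ℕ) := congrArg Fin.val hp
          omega)]
        norm_num
      · rw [if_neg hp]; norm_num
end Claims

lemma sum_delta1 {ι : Type} [Fintype ι] [DecidableEq ι] (G F : ι → ℝ) (u : ι) (c : ℝ)
    (hF : ∀ b, F b = if b = u then c else 0) : ∑ b, G b * F b = G u * c := by
  have h : ∀ b, G b * F b = if b = u then G b * c else 0 := fun b => by
    rw [hF]; by_cases hb : b = u <;> simp [hb]
  simp only [h]
  rw [Finset.sum_ite_eq' Finset.univ u (fun b => G b * c)]
  simp

lemma sum_delta2 {ι : Type} [Fintype ι] [DecidableEq ι] (G F : ι → ℝ) (u v : ι) (huv : u ≠ v)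
    (c d : ℝ)
    (hF : ∀ b, F b = (if b = u then c else 0) + (if b = v then d else 0)) :
    ∑ b, G b * F b = G u * c + G v * d := by
  have h : ∀ b, G b * F b = (if b = u then G b * c else 0) + (if b = v then G b * d else 0) :=
    fun b => by
      rw [hF]
      by_cases hb : b = u
      · subst hb; rw [if_pos rfl, if_pos rfl, if_neg huv, if_neg huv]; ring
      · by_cases hb' : b = v
        · subst hb'; rw [if_neg hb, if_neg hb, if_pos rfl, if_pos rfl]; ring
        · rw [if_neg hb, if_neg hb, if_neg hb', if_neg hb']; ring
  simp only [h]
  rw [Finset.sum_add_distrib,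
    Finset.sum_ite_eq' Finset.univ u (fun b => G b * c),
    Finset.sum_ite_eq' Finset.univ v (fun b => G b * d)]
  simp

lemma ppKill_li (hn : 3 ≤ n) : LinearIndependent ℝ (ppKill n) := by
  rw [linearIndependent_iff']
  intro s g hsum a ha
  set G : ppKillIdx n → ℝ := fun b => if b ∈ s then g b else 0 with hGdef
  have hG : ∀ (k : Fin n) (x : Fin n → ℝ), (∑ b, G b * ppKill n b k x) = 0 := by
    intro k x
    have h1 := congrFun (congrFun hsum k) x
    simp only [Finset.sum_apply, Pi.smul_apply, smul_eq_mul, Pi.zero_apply] at h1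
    calc ∑ b, G b * ppKill n b k x
        = ∑ b ∈ s, g b * ppKill n b k x := by
          have h2 : ∀ b, G b * ppKill n b k x
              = if b ∈ s then g b * ppKill n b k x else 0 := fun b => by
            rw [hGdef]; by_cases hb : b ∈ s <;> simp [hb]
          simp only [h2]
          rw [Finset.sum_ite_mem, Finset.univ_inter]
      _ = 0 := h1
  -- ∂y
  have hDy : G (Sum.inl 1) = 0 := by
    have h := hG ⟨1, by omega⟩ 0
    rw [sum_delta1 G _ (Sum.inl 1) 1 (claim1 hn 0)] at h
    linarith
  -- exp fields
  have hE23 : G (Sum.inl 2) = 0 ∧ G (Sum.inl 3) = 0 := by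
    have h1 := hG ⟨2, by omega⟩ 0
    have h2 := hG ⟨2, by omega⟩ (Pi.single (⟨1, by omega⟩ : Fin n) (1:ℝ))
    rw [sum_delta2 G _ (Sum.inl 2) (Sum.inl 3)
      (ne_ll (fun he => absurd (congrArg Fin.val he) (by norm_num : ¬((2:ℕ) = 3)))) _ _
      (claim2 hn 0)] at h1
    rw [sum_delta2 G _ (Sum.inl 2) (Sum.inl 3)
      (ne_ll (fun he => absurd (congrArg Fin.val he) (by norm_num : ¬((2:ℕ) = 3)))) _ _
      (claim2 hn (Pi.single (⟨1, by omega⟩ : Fin n) (1:ℝ)))] at h2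
    rw [co_zero] at h1
    rw [co_single (by omega)] at h2
    norm_num at h1 h2
    have hkey : G (Sum.inl 2) * (Real.exp 1 - Real.exp (-1)) = 0 := by
      linear_combination h2 - Real.exp (-1) * h1
    have hne : Real.exp 1 - Real.exp (-1) ≠ 0 :=
      ne_of_gt (sub_pos.mpr (Real.exp_lt_exp.mpr (by norm_num)))
    have h2z : G (Sum.inl 2) = 0 := by
      rcases mul_eq_zero.mp hkey with h | h
      · exact h
      · exact absurd h hne
    exact ⟨h2z, by linarith⟩
  -- ∂x
  have hDx : G (Sum.inl 0) = 0 := by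
    have h := hG ⟨0, by omega⟩ 0
    rw [sum_delta1 G _ (Sum.inl 0) 1 (claim3 hn)] at h
    linarith
  -- translations in u
  have hU : ∀ (w : Fin n) (hw : 3 ≤ (w : ℕ)), G (Sum.inr (Sum.inl ⟨w, hw⟩)) = 0 := by
    intro w hw
    have h := hG w 0
    rw [sum_delta1 G _ (Sum.inr (Sum.inl ⟨w, hw⟩)) 1 (claim4 w hw)] at h
    linarith
  -- linear fields
  have hL : ∀ (w : Fin n) (hw : 3 ≤ (w : ℕ)), G (Sum.inr (Sum.inr (Sum.inl ⟨w, hw⟩))) = 0 := by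
    intro w hw
    have h := hG w (Pi.single (⟨1, by omega⟩ : Fin n) (1:ℝ))
    rw [sum_delta2 G _ (Sum.inr (Sum.inl ⟨w, hw⟩)) (Sum.inr (Sum.inr (Sum.inl ⟨w, hw⟩)))
      ne_ul _ _ (claim5 hn w hw)] at h
    have := hU w hw
    linarith
  -- rotations
  have hR : ∀ (p0 q0 : Fin n) (h30 : 3 ≤ (p0 : ℕ)) (hlt0 : (p0 : ℕ) < (q0 : ℕ)),
      G (Sum.inr (Sum.inr (Sum.inr ⟨(p0, q0), ⟨h30, hlt0⟩⟩))) = 0 := by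
    intro p0 q0 h30 hlt0
    have h := hG q0 (Pi.single p0 (1:ℝ))
    rw [sum_delta2 G _ (Sum.inr (Sum.inl ⟨q0, by omega⟩))
      (Sum.inr (Sum.inr (Sum.inr ⟨(p0, q0), ⟨h30, hlt0⟩⟩)))
      ne_ul _ _ (claim6 hn p0 q0 h30 hlt0)] at h
    have := hU q0 (by omega)
    linarith
  -- all coefficients vanish
  have hall : ∀ b, G b = 0 := by
    intro b
    rcases b with ⟨mv, hm⟩ | ⟨w, hw⟩ | ⟨w, hw⟩ | ⟨⟨p, q⟩, hpq⟩
    · interval_cases mv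
      · exact (congrArg G (congrArg Sum.inl (Fin.ext rfl : (⟨0, hm⟩ : Fin 4) = 0))).trans hDx
      · exact (congrArg G (congrArg Sum.inl (Fin.ext rfl : (⟨1, hm⟩ : Fin 4) = 1))).trans hDy
      · exact (congrArg G (congrArg Sum.inl (Fin.ext rfl : (⟨2, hm⟩ : Fin 4) = 2))).trans hE23.1
      · exact (congrArg G (congrArg Sum.inl (Fin.ext rfl : (⟨3, hm⟩ : Fin 4) = 3))).trans hE23.2
    · exact hU w hw
    · exact hL w hw
    · have hpq' : 3 ≤ (p:ℕ) ∧ (p:ℕ) < (q:ℕ) := hpq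
      exact hR p q hpq'.1 hpq'.2
  have := hall a
  rw [hGdef] at this
  simp only [if_pos ha] at this
  exact this

lemma count1 (N : ℕ) : (∑ t ∈ Finset.range N, if 3 ≤ t then 1 else 0) = N - 3 := by
  induction N with
  | zero => simp
  | succ N ih =>
    rw [Finset.sum_range_succ, ih]
    split_ifs with h <;> omega

lemma count2 (N a : ℕ) : (∑ t ∈ Finset.range N, if a < t then 1 else 0) = N - (a + 1) := by
  induction N with
  | zero => simp
  | succ N ih =>
    rw [Finset.sum_range_succ, ih]
    split_ifs with h <;> omega

lemma card_A : Fintype.card {i : Fin n // 3 ≤ (i : ℕ)} = n - 3 := by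
  rw [Fintype.card_subtype, Finset.card_filter]
  rw [Fin.sum_univ_eq_sum_range (fun t => if 3 ≤ t then 1 else 0) n]
  exact count1 n

lemma card_P :
    Fintype.card {p : Fin n × Fin n // 3 ≤ (p.1 : ℕ) ∧ (p.1 : ℕ) < (p.2 : ℕ)}
      = ∑ t ∈ Finset.range (n - 3), t := by
  rw [Fintype.card_subtype, Finset.card_filter]
  rw [Fintype.sum_prod_type]
  have hinner : ∀ i : Fin n,
      (∑ j : Fin n, if 3 ≤ (i : ℕ) ∧ (i : ℕ) < (j : ℕ) then 1 else 0)
        = if 3 ≤ (i : ℕ) then n - ((i : ℕ) + 1) else 0 := by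
    intro i
    by_cases h : 3 ≤ (i : ℕ)
    · rw [if_pos h]
      have : ∀ j : Fin n, (if 3 ≤ (i : ℕ) ∧ (i : ℕ) < (j : ℕ) then (1:ℕ) else 0)
          = if (i : ℕ) < (j : ℕ) then 1 else 0 := by
        intro j; by_cases hj : (i : ℕ) < (j : ℕ) <;> simp [hj, h]
      simp only [this]
      rw [Fin.sum_univ_eq_sum_range (fun t => if (i : ℕ) < t then 1 else 0) n]
      exact count2 n i
    · rw [if_neg h]
      refine Finset.sum_eq_zero fun j _ => ?_
      rw [if_neg (fun hc => h hc.1)]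
  simp only [hinner]
  rw [Fin.sum_univ_eq_sum_range (fun t => if 3 ≤ t then n - (t + 1) else 0) n]
  rw [← Finset.sum_range_reflect (fun t => if 3 ≤ t then n - (t + 1) else 0) n]
  rw [show (∑ j ∈ Finset.range n, if 3 ≤ n - 1 - j then n - (n - 1 - j + 1) else 0)
      = ∑ j ∈ Finset.range n, if j < n - 3 then j else 0 from
    Finset.sum_congr rfl fun j hj => by
      have hj' : j < n := Finset.mem_range.mp hj
      split_ifs <;> omega]
  rw [← Finset.sum_subset (Finset.range_subset_range.mpr (by omega : n - 3 ≤ n))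
    (fun j _ hj => if_neg (fun hc => hj (Finset.mem_range.mpr hc)))]
  exact Finset.sum_congr rfl fun j hj => if_pos (Finset.mem_range.mp hj)

lemma card_idx (hn : 3 ≤ n) :
    Fintype.card (ppKillIdx n) = (n * n + 8 - 3 * n) / 2 := by
  obtain ⟨m, rfl⟩ : ∃ m, n = m + 3 := ⟨n - 3, by omega⟩
  have hc : Fintype.card (ppKillIdx (m + 3))
      = Fintype.card (Fin 4 ⊕ {i : Fin (m+3) // 3 ≤ (i : ℕ)} ⊕ {i : Fin (m+3) // 3 ≤ (i : ℕ)} ⊕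
        {p : Fin (m+3) × Fin (m+3) // 3 ≤ (p.1 : ℕ) ∧ (p.1 : ℕ) < (p.2 : ℕ)}) :=
    Fintype.card_congr (Equiv.cast rfl)
  rw [hc, Fintype.card_sum, Fintype.card_sum, Fintype.card_sum, Fintype.card_fin,
    card_A, card_P]
  set B := ∑ t ∈ Finset.range ((m + 3) - 3), t with hB
  have hB3 : (m + 3) - 3 = m := by omega
  have hGauss : 2 * B = m * (m - 1) := by
    rw [hB, hB3, mul_comm]
    exact Finset.sum_range_id_mul_two m
  have hmm : m * m = 2 * B + m := by
    cases m with
    | zero =>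
      have h0 : 2 * B = 0 := by simpa using hGauss
      omega
    | succ t =>
      have h1 : (t+1) * ((t+1) - 1) = (t+1) * t := rfl
      have h2 : (t+1) * (t+1) = (t+1) * t + (t+1) := by ring
      rw [h2, ← h1, ← hGauss]
  have hnum : (m + 3) * (m + 3) + 8 = 3 * (m + 3) + (2 * B + 4 * m + 8) := by
    calc (m + 3) * (m + 3) + 8 = m * m + 6 * m + 17 := by ring
      _ = (2 * B + m) + 6 * m + 17 := by rw [hmm]
      _ = 3 * (m + 3) + (2 * B + 4 * m + 8) := by ring
  rw [hnum, Nat.add_sub_cancel_left,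
    show 2 * B + 4 * m + 8 = 2 * (B + 2 * m + 4) by ring,
    Nat.mul_div_cancel_left _ (by norm_num : 0 < 2)]
  omega

end GppHelper

/-- the listed vector fields are Killing fields of the pp-wave
metric, they are linearly independent, and hence
`dim I(g) ≥ (n² − 3n + 8)/2`. -/
theorem gpp_killing_fields {n : ℕ} (hn : 3 ≤ n) :
    (∀ (idx : ppKillIdx n) (i j : Fin n) (x : Fin n → ℝ),
      lieMetric (ppKill n idx) (gpp n) i j x = 0) ∧
    LinearIndependent ℝ (ppKill n) ∧
    (((n * n + 8 - 3 * n) / 2 : ℕ) : Cardinal) ≤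
      Module.rank ℝ ↥(Submodule.span ℝ (KillSet (gpp n))) := by
  refine ⟨fun idx i j x => GppHelper.killing_all hn idx i j x, GppHelper.ppKill_li hn, ?_⟩
  have hmem : ∀ idx : ppKillIdx n, ppKill n idx ∈ KillSet (gpp n) := fun idx =>
    ⟨GppHelper.smooth_ppKill idx, fun i j x => GppHelper.killing_all hn idx i j x⟩
  set M := Submodule.span ℝ (KillSet (gpp n)) with hM
  let v' : ppKillIdx n → M := fun idx => ⟨ppKill n idx, Submodule.subset_span (hmem idx)⟩
  have hli : LinearIndependent ℝ v' := by
    apply LinearIndependent.of_comp (M.subtype)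
    exact GppHelper.ppKill_li hn
  have hle := hli.cardinal_le_rank
  rw [Cardinal.mk_fintype, GppHelper.card_idx hn] at hle
  exact hle
end
end

section
/- The vector field v = 2x∂_x + z∂_z + Σ_{i=4}^n u_i∂_{u_i} satisfies L_v g = 2g for the metric g = 2dx dy + z²dy² + dz² + Σ_{i=4}^n du_i², i.e., v is a homothety that is not a Killing field. -/
noncomputable section

open scoped BigOperators

/-- The vector field `v = 2x∂_x + z∂_z + Σ_{i≥4} u_i∂_{u_i}`. -/
def ppHomField (n : ℕ) : Fin n → (Fin n → ℝ) → ℝ := fun k x =>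
  if (k : ℕ) = 0 then 2 * co 0 x
  else if (k : ℕ) = 2 then co 2 x
  else if 3 ≤ (k : ℕ) then x k
  else 0

/-- Auxiliary diagonal coefficient of the homothety field. -/
def cHom {n : ℕ} (k : Fin n) : ℝ :=
  if (k : ℕ) = 0 then 2 else if (k : ℕ) = 1 then 0 else 1

lemma pd_hasFDeriv {n : ℕ} (i : Fin n) {f : (Fin n → ℝ) → ℝ} {x : Fin n → ℝ}
    {L : (Fin n → ℝ) →L[ℝ] ℝ} (h : HasFDerivAt f L x) :
    pd i f x = L (Pi.single i 1) := by
  rw [pd, h.fderiv]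

lemma hasFDerivAt_coord {n : ℕ} (j : Fin n) (x : Fin n → ℝ) :
    HasFDerivAt (fun y : Fin n → ℝ => y j)
      (ContinuousLinearMap.proj j : (Fin n → ℝ) →L[ℝ] ℝ) x :=
  (ContinuousLinearMap.proj j : (Fin n → ℝ) →L[ℝ] ℝ).hasFDerivAt

lemma pd_proj {n : ℕ} (i j : Fin n) (x : Fin n → ℝ) :
    pd i (fun y => y j) x = if i = j then 1 else 0 := by
  rw [pd_hasFDeriv i (hasFDerivAt_coord j x)]
  simp [Pi.single_apply, eq_comm]

lemma pd_v {n : ℕ} (i k : Fin n) (x : Fin n → ℝ) :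
    pd i (ppHomField n k) x = if i = k then cHom k else 0 := by
  unfold ppHomField cHom
  by_cases h0 : (k : ℕ) = 0
  · simp only [if_pos h0]
    have hk : k = ⟨0, k.pos⟩ := Fin.ext h0
    have hfun : (fun y : Fin n → ℝ => 2 * co 0 y) =
        fun y : Fin n → ℝ => 2 * y ⟨0, k.pos⟩ := by
      funext y; simp [co, k.pos]
    have hD : HasFDerivAt (fun y : Fin n → ℝ => 2 * co 0 y)
        ((2:ℝ) • (ContinuousLinearMap.proj (⟨0, k.pos⟩ : Fin n) : (Fin n → ℝ) →L[ℝ] ℝ)) x := by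
      rw [hfun]
      exact (hasFDerivAt_coord _ x).const_mul 2
    rw [pd_hasFDeriv i hD, hk]
    simp [Pi.single_apply, eq_comm]
  · simp only [if_neg h0]
    by_cases h2 : (k : ℕ) = 2
    · simp only [if_pos h2]
      have hlt : 2 < n := h2 ▸ k.isLt
      have hk : k = ⟨2, hlt⟩ := Fin.ext h2
      have hD : HasFDerivAt (fun y : Fin n → ℝ => co 2 y)
          (ContinuousLinearMap.proj (⟨2, hlt⟩ : Fin n) : (Fin n → ℝ) →L[ℝ] ℝ) x := by
        have hfun : (fun y : Fin n → ℝ => co 2 y) =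
            fun y : Fin n → ℝ => y ⟨2, hlt⟩ := by
          funext y; simp [co, hlt]
        rw [hfun]; exact hasFDerivAt_coord _ x
      have h1 : (k : ℕ) ≠ 1 := by omega
      rw [pd_hasFDeriv i hD, hk]
      simp [Pi.single_apply, eq_comm, h1]
    · simp only [if_neg h2]
      by_cases h3 : 3 ≤ (k : ℕ)
      · simp only [if_pos h3]
        rw [pd_proj]
        have h1 : (k : ℕ) ≠ 1 := by omega
        simp only [h1, if_false]
      · simp only [if_neg h3]
        have h1 : (k : ℕ) = 1 := by omega
        simp [pd_const, h1]

lemma pd_g {n : ℕ} (hn : 3 ≤ n) (k i j : Fin n) (x : Fin n → ℝ) :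
    pd k (fun y => gpp n y i j) x =
      if (i : ℕ) = 1 ∧ (j : ℕ) = 1 ∧ (k : ℕ) = 2 then 2 * co 2 x else 0 := by
  have h2n : 2 < n := by omega
  unfold gpp
  by_cases hP : ((i : ℕ) = 0 ∧ (j : ℕ) = 1) ∨ ((i : ℕ) = 1 ∧ (j : ℕ) = 0)
  · have hne : ¬((i : ℕ) = 1 ∧ (j : ℕ) = 1 ∧ (k : ℕ) = 2) := by omega
    simp only [if_pos hP, if_neg hne]
    exact pd_const k 1 x
  · simp only [if_neg hP]
    by_cases hQ : (i : ℕ) = 1 ∧ (j : ℕ) = 1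
    · simp only [if_pos hQ]
      have hD : HasFDerivAt (fun y : Fin n → ℝ => (co 2 y) ^ 2)
          ((x ⟨2, h2n⟩) •
              (ContinuousLinearMap.proj (⟨2, h2n⟩ : Fin n) : (Fin n → ℝ) →L[ℝ] ℝ)
            + (x ⟨2, h2n⟩) •
              (ContinuousLinearMap.proj (⟨2, h2n⟩ : Fin n) : (Fin n → ℝ) →L[ℝ] ℝ)) x := by
        have hfun : (fun y : Fin n → ℝ => (co 2 y) ^ 2) =
            fun y : Fin n → ℝ => y ⟨2, h2n⟩ * y ⟨2, h2n⟩ := by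
          funext y; simp [co, h2n]; ring
        rw [hfun]
        exact (hasFDerivAt_coord (⟨2, h2n⟩ : Fin n) x).mul
          (hasFDerivAt_coord (⟨2, h2n⟩ : Fin n) x)
      rw [pd_hasFDeriv k hD]
      simp only [hQ.1, hQ.2, true_and]
      by_cases hk : (k : ℕ) = 2
      · have hkk : k = ⟨2, h2n⟩ := Fin.ext hk
        subst hkk
        simp [Pi.single_apply, co, h2n]; ring
      · have hkk : k ≠ ⟨2, h2n⟩ := fun h => hk (congrArg Fin.val h)
        simp [Pi.single_apply, hkk, hk]
    · have hne : ¬((i : ℕ) = 1 ∧ (j : ℕ) = 1 ∧ (k : ℕ) = 2) := fun h => hQ ⟨h.1, h.2.1⟩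
      simp only [if_neg hQ, if_neg hne]
      by_cases hR : i = j ∧ 2 ≤ (i : ℕ)
      · simp only [if_pos hR]; exact pd_const k 1 x
      · simp only [if_neg hR]; exact pd_const k 0 x

lemma lieMetric_gpp {n : ℕ} (hn : 3 ≤ n) (i j : Fin n) (x : Fin n → ℝ) :
    lieMetric (ppHomField n) (gpp n) i j x =
      (if (i : ℕ) = 1 ∧ (j : ℕ) = 1 then 2 * (co 2 x) ^ 2 else 0)
        + gpp n x i j * cHom i + gpp n x i j * cHom j := by
  have h2n : 2 < n := by omega
  unfold lieMetric
  have hsum : ∀ k : Fin n,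
      ppHomField n k x * pd k (fun y => gpp n y i j) x
        + gpp n x k j * pd i (ppHomField n k) x
        + gpp n x i k * pd j (ppHomField n k) x =
      (if k = ⟨2, h2n⟩ then (if (i : ℕ) = 1 ∧ (j : ℕ) = 1
          then ppHomField n k x * (2 * co 2 x) else 0) else 0)
        + (if k = i then gpp n x i j * cHom i else 0)
        + (if k = j then gpp n x i j * cHom j else 0) := by
    intro k
    rw [pd_g hn, pd_v, pd_v]
    congr 1
    · congr 1
      · by_cases hk : k = ⟨2, h2n⟩
        · subst hk
          by_cases hij : (i : ℕ) = 1 ∧ (j : ℕ) = 1 <;> simp [hij]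
        · have : (k : ℕ) ≠ 2 := fun h => hk (Fin.ext h)
          simp [hk, this]
      · by_cases hk : i = k
        · subst hk; simp
        · simp [hk, Ne.symm hk]
    · by_cases hk : j = k
      · subst hk; simp
      · simp [hk, Ne.symm hk]
  rw [Finset.sum_congr rfl (fun k _ => hsum k)]
  rw [Finset.sum_add_distrib, Finset.sum_add_distrib]
  rw [Finset.sum_ite_eq' Finset.univ, Finset.sum_ite_eq' Finset.univ,
    Finset.sum_ite_eq' Finset.univ]
  have hv2 : ppHomField n ⟨2, h2n⟩ x = co 2 x := by simp [ppHomField]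
  simp only [Finset.mem_univ, if_true, hv2]
  by_cases hij : (i : ℕ) = 1 ∧ (j : ℕ) = 1 <;> simp [hij] <;> ring

/-- `v = 2x∂_x + z∂_z + Σ u_i∂_{u_i}` satisfies `L_v g = 2g` for
the pp-wave metric, i.e. it is a homothety which is not a Killing field. -/
theorem gpp_homothety {n : ℕ} (hn : 3 ≤ n) :
    (∀ (i j : Fin n) (x : Fin n → ℝ),
      lieMetric (ppHomField n) (gpp n) i j x = 2 * gpp n x i j) ∧
    ¬ (∀ (i j : Fin n) (x : Fin n → ℝ),
      lieMetric (ppHomField n) (gpp n) i j x = 0) := by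
  have h2n : 2 < n := by omega
  have main : ∀ (i j : Fin n) (x : Fin n → ℝ),
      lieMetric (ppHomField n) (gpp n) i j x = 2 * gpp n x i j := by
    intro i j x
    rw [lieMetric_gpp hn i j x]
    unfold gpp cHom
    by_cases h01 : ((i : ℕ) = 0 ∧ (j : ℕ) = 1) ∨ ((i : ℕ) = 1 ∧ (j : ℕ) = 0)
    · have h11 : ¬((i : ℕ) = 1 ∧ (j : ℕ) = 1) := by omega
      rcases h01 with ⟨hi, hj⟩ | ⟨hi, hj⟩ <;>
        simp [hi, hj, h11] <;> norm_num
    · by_cases h11 : (i : ℕ) = 1 ∧ (j : ℕ) = 1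
      · simp [h01, h11, h11.1, h11.2]; try ring
      · simp only [h01, if_false, h11, if_false]
        by_cases hd : i = j ∧ 2 ≤ (i : ℕ)
        · have hi0 : (i : ℕ) ≠ 0 := by omega
          have hi1 : (i : ℕ) ≠ 1 := by omega
          have hj0 : (j : ℕ) ≠ 0 := by rw [← hd.1]; omega
          have hj1 : (j : ℕ) ≠ 1 := by rw [← hd.1]; omega
          have hj2 : 2 ≤ (j : ℕ) := by rw [← hd.1]; exact hd.2
          simp [hd, h11, hi0, hi1, hj0, hj1, hj2]; norm_num
        · simp [hd, h11]
  refine ⟨main, fun h => ?_⟩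
  have := h ⟨2, h2n⟩ ⟨2, h2n⟩ 0
  rw [main ⟨2, h2n⟩ ⟨2, h2n⟩ 0] at this
  have hg : gpp n (0 : Fin n → ℝ) ⟨2, h2n⟩ ⟨2, h2n⟩ = 1 := by
    simp [gpp]
  rw [hg] at this
  norm_num at this
end
end
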